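/- Let λ, μ : ℕ → ℝ be nonincreasing sequences of nonnegative real numbers with ∑_{n=1}^∞ λ_n = ∑_{n=1}^∞ μ_n = 1 such that λ is weakly majorized by μ (for every N, ∑_{k=1}^N λ_k ≤ ∑_{k=1}^N μ_k). If ∑_{k=1}^∞ (1+λ_k)·log(1+λ_k) = ∑_{k=1}^∞ (1+μ_k)·log(1+μ_k), then λ_k = μ_k for every k. -/

import Mathlib

/-!
`F x = (1 + x) log (1 + x)` is strictly convex with `F' x = log (1 + x) + 1`, so each gap
`F (μ k) - F (λ k) - F' (λ k) (μ k - λ k)` is nonnegative and vanishes only when `λ k = μ k`.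
The weights `F' (λ k)` are nonnegative and nonincreasing, so by Abel summation the weak
majorization gives `∑ F' (λ k) (μ k - λ k) ≥ 0`. Hence the gaps sum to at most
`∑ F (μ k) - ∑ F (λ k) = 0`, and all of them vanish.
-/

open Finset Real

theorem mul_log_add_tangent_le {x y : ℝ} (hx : 0 < x) (hy : 0 < y) :
    y * log y + (log y + 1) * (x - y) ≤ x * log x := by
  have h := mul_le_mul_of_nonneg_left (log_le_sub_one_of_pos (div_pos hy hx)) hx.le
  rw [log_div hy.ne' hx.ne', mul_sub_one, mul_div_cancel₀ _ hx.ne'] at h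
  linarith

theorem mul_log_add_tangent_lt {x y : ℝ} (hx : 0 < x) (hy : 0 < y) (hxy : x ≠ y) :
    y * log y + (log y + 1) * (x - y) < x * log x := by
  have hne : y / x ≠ 1 := fun h => hxy ((div_eq_one_iff_eq hx.ne').1 h).symm
  have h := mul_lt_mul_of_pos_left (log_lt_sub_one_of_pos (div_pos hy hx) hne) hx
  rw [log_div hy.ne' hx.ne', mul_sub_one, mul_div_cancel₀ _ hx.ne'] at h
  linarith

section Abel

variable {R : Type*} [CommRing R] [LinearOrder R] [IsStrictOrderedRing R]

theorem mul_sum_range_le_sum_range_mul_of_antitone {c d : ℕ → R} (hc : Antitone c)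
    (hd : ∀ N, 0 ≤ ∑ k ∈ range N, d k) (N : ℕ) :
    c N * ∑ k ∈ range N, d k ≤ ∑ k ∈ range N, c k * d k := by
  induction N with
  | zero => simp
  | succ N ih =>
    have hstep : c (N + 1) * ∑ k ∈ range (N + 1), d k ≤ c N * ∑ k ∈ range (N + 1), d k :=
      mul_le_mul_of_nonneg_right (hc N.le_succ) (hd (N + 1))
    simp only [sum_range_succ] at hstep ⊢
    linarith [mul_add (c N) (∑ k ∈ range N, d k) (d N)]

theorem sum_range_mul_nonneg_of_antitone {c d : ℕ → R} (hc : Antitone c) (hc₀ : ∀ k, 0 ≤ c k)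
    (hd : ∀ N, 0 ≤ ∑ k ∈ range N, d k) (N : ℕ) :
    0 ≤ ∑ k ∈ range N, c k * d k :=
  (mul_nonneg (hc₀ N) (hd N)).trans (mul_sum_range_le_sum_range_mul_of_antitone hc hd N)

end Abel

theorem summable_mul_of_antitone {c d : ℕ → ℝ} (hc : Antitone c) (hc₀ : ∀ k, 0 ≤ c k)
    (hd : Summable d) : Summable fun k => c k * d k :=
  (hd.norm.mul_left (c 0)).of_norm_bounded fun k => by
    rw [norm_mul, Real.norm_of_nonneg (hc₀ k)]
    gcongr
    exact hc (Nat.zero_le k)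

theorem tsum_mul_nonneg_of_antitone {c d : ℕ → ℝ} (hc : Antitone c) (hc₀ : ∀ k, 0 ≤ c k)
    (hd : ∀ N, 0 ≤ ∑ k ∈ range N, d k) : 0 ≤ ∑' k, c k * d k := by
  by_cases hcd : Summable fun k => c k * d k
  · exact ge_of_tendsto' hcd.hasSum.tendsto_sum_nat (sum_range_mul_nonneg_of_antitone hc hc₀ hd)
  · exact (tsum_eq_zero_of_not_summable hcd).ge

theorem summable_one_add_mul_log_one_add {l : ℕ → ℝ} (hl : ∀ n, 0 ≤ l n) (hs : Summable l) :
    Summable fun k => (1 + l k) * log (1 + l k) := by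
  refine Summable.of_nonneg_of_le (fun k => ?_) (fun k => ?_) (hs.mul_left (1 + ∑' k, l k))
  · exact mul_nonneg (by linarith [hl k]) (log_nonneg (by linarith [hl k]))
  · have hlog : log (1 + l k) ≤ l k := by
      linarith [log_le_sub_one_of_pos (by linarith [hl k] : 0 < 1 + l k)]
    have hle : l k ≤ ∑' k, l k := hs.le_tsum k fun j _ => hl j
    calc (1 + l k) * log (1 + l k) ≤ (1 + l k) * l k := by gcongr; linarith [hl k]
      _ ≤ (1 + ∑' k, l k) * l k := by gcongr; exact hl k


theorem one_add_mul_log_one_add_tangent_le {a b : ℝ} (ha : 0 ≤ a) (hb : 0 ≤ b) :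
    (1 + a) * log (1 + a) + (log (1 + a) + 1) * (b - a) ≤ (1 + b) * log (1 + b) := by
  have h := mul_log_add_tangent_le (x := 1 + b) (y := 1 + a) (by linarith) (by linarith)
  rwa [add_sub_add_left_eq_sub] at h

theorem one_add_mul_log_one_add_tangent_lt {a b : ℝ} (ha : 0 ≤ a) (hb : 0 ≤ b) (hab : a ≠ b) :
    (1 + a) * log (1 + a) + (log (1 + a) + 1) * (b - a) < (1 + b) * log (1 + b) := by
  have h := mul_log_add_tangent_lt (x := 1 + b) (y := 1 + a) (by linarith) (by linarith)
    fun h => hab (by linarith)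
  rwa [add_sub_add_left_eq_sub] at h

theorem tsum_one_add_mul_log_one_add_lt_of_weak_majorization {l m : ℕ → ℝ} (hl_mono : Antitone l)
    (hl : ∀ n, 0 ≤ l n) (hm : ∀ n, 0 ≤ m n) (hl_sum : Summable l) (hm_sum : Summable m)
    (hmaj : ∀ N, ∑ k ∈ range N, l k ≤ ∑ k ∈ range N, m k) {k : ℕ} (hk : l k ≠ m k) :
    ∑' k, (1 + l k) * log (1 + l k) < ∑' k, (1 + m k) * log (1 + m k) := by
  set c : ℕ → ℝ := fun k => log (1 + l k) + 1
  have hc_anti : Antitone c := fun i j hij => by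
    have := hl j
    simp only [c]
    gcongr
    exact hl_mono hij
  have hc_nonneg : ∀ k, 0 ≤ c k := fun k =>
    add_nonneg (log_nonneg (by linarith [hl k])) zero_le_one
  have hcd_nonneg : 0 ≤ ∑' k, c k * (m k - l k) :=
    tsum_mul_nonneg_of_antitone hc_anti hc_nonneg fun N => by
      rw [sum_sub_distrib]
      linarith [hmaj N]
  set gap : ℕ → ℝ := fun k =>
    (1 + m k) * log (1 + m k) - (1 + l k) * log (1 + l k) - c k * (m k - l k)
  have hgap : HasSum gap ((∑' k, (1 + m k) * log (1 + m k)) -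
      (∑' k, (1 + l k) * log (1 + l k)) - ∑' k, c k * (m k - l k)) :=
    ((summable_one_add_mul_log_one_add hm hm_sum).hasSum.sub
      (summable_one_add_mul_log_one_add hl hl_sum).hasSum).sub
      (summable_mul_of_antitone hc_anti hc_nonneg (hm_sum.sub hl_sum)).hasSum
  have hgap_pos : 0 < ∑' k, gap k := hgap.summable.tsum_pos
    (fun j => by simp only [gap, c]; linarith [one_add_mul_log_one_add_tangent_le (hl j) (hm j)])
    k (by simp only [gap, c]; linarith [one_add_mul_log_one_add_tangent_lt (hl k) (hm k) hk])
  rw [hgap.tsum_eq] at hgap_pos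
  linarith

theorem stmt_14_general (l m : ℕ → ℝ) (hl_mono : Antitone l)
    (hl : ∀ n, 0 ≤ l n) (hm : ∀ n, 0 ≤ m n)
    (hl_sum : HasSum l 1) (hm_sum : HasSum m 1)
    (hmaj : ∀ N : ℕ, ∑ k ∈ Finset.range N, l k ≤ ∑ k ∈ Finset.range N, m k)
    (heq : (∑' k, (1 + l k) * Real.log (1 + l k)) =
      ∑' k, (1 + m k) * Real.log (1 + m k)) :
    ∀ k, l k = m k := by
  intro k
  by_contra hk
  exact heq.not_lt <| tsum_one_add_mul_log_one_add_lt_of_weak_majorization hl_mono hl hm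
    hl_sum.summable hm_sum.summable hmaj hk

/-- If λ, μ are nonincreasing nonnegative sequences summing to 1 with
λ weakly majorized by μ, and the renormalized entropies coincide, then λ = μ. -/
theorem stmt_14 (l m : ℕ → ℝ) (hl_mono : Antitone l) (hm_mono : Antitone m)
    (hl : ∀ n, 0 ≤ l n) (hm : ∀ n, 0 ≤ m n)
    (hl_sum : HasSum l 1) (hm_sum : HasSum m 1)
    (hmaj : ∀ N : ℕ, ∑ k ∈ Finset.range N, l k ≤ ∑ k ∈ Finset.range N, m k)
    (heq : (∑' k, (1 + l k) * Real.log (1 + l k)) =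
      ∑' k, (1 + m k) * Real.log (1 + m k)) :
    ∀ k, l k = m k :=
  stmt_14_general l m hl_mono hl hm hl_sum hm_sum hmaj heq
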